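/- arXiv:2503.06509 — 5 statements merged into one kernel-verified Lean document; each statement's English description precedes it below -/
import Mathlib

section
/- Let h_{ij} : ℝ^n → ℝ be continuously differentiable and convex for j ∈ {1,...,m}, i ∈ {1,...,p}, and set H_j(x) = max_i h_{ij}(x). Let D ⊆ ℝ^n be convex. If x* ∈ D satisfies: there is an index j₀ such that ⟨∇h_{i j₀}(x*), x − x*⟩ ≥ 0 for all x ∈ D and all i ∈ I_{j₀}(x*), then x* is a weakly efficient solution, i.e., there is no x ∈ D with H_j(x) < H_j(x*) for all j. -/
/-- Gradient inequality for convex differentiable functions: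
`f x ≥ f y + ⟪∇f y, x - y⟫`. -/
lemma convex_gradient_ineq {E : Type*} [NormedAddCommGroup E] [InnerProductSpace ℝ E]
    [CompleteSpace E] {f : E → ℝ} {y : E} (hconv : ConvexOn ℝ Set.univ f)
    (hdiff : DifferentiableAt ℝ f y) (x : E) :
    f y + (inner ℝ (gradient f y) (x - y) : ℝ) ≤ f x := by
  set v : E := x - y with hv
  set g : ℝ → ℝ := fun t => f (y + t • v) with hg
  have hcurve : ∀ t : ℝ, HasDerivAt (fun t : ℝ => y + t • v) v t := by
    intro t
    simpa using ((hasDerivAt_id t).smul_const v).const_add y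
  have hfd : HasFDerivAt f ((InnerProductSpace.toDual ℝ E) (gradient f y)) y :=
    hasGradientAt_iff_hasFDerivAt.mp hdiff.hasGradientAt
  have hg0 : HasDerivAt g ((inner ℝ (gradient f y) v : ℝ)) 0 := by
    have hfd' : HasFDerivAt f ((InnerProductSpace.toDual ℝ E) (gradient f y)) (y + (0:ℝ) • v) := by
      simpa using hfd
    have := hfd'.comp_hasDerivAt (0 : ℝ) (hcurve 0)
    simpa [g, Function.comp_def] using this
  have hgconv : ConvexOn ℝ (Set.univ : Set ℝ) g := by
    have := hconv.comp_affineMap (AffineMap.lineMap y x : ℝ →ᵃ[ℝ] E)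
    have heq : (f ∘ (AffineMap.lineMap y x : ℝ →ᵃ[ℝ] E)) = g := by
      funext t
      simp [g, AffineMap.lineMap_apply, hv, add_comm]
    have hpre : ((AffineMap.lineMap y x : ℝ →ᵃ[ℝ] E) ⁻¹' Set.univ) = Set.univ := by simp
    rwa [heq, hpre] at this
  have hslope := hgconv.le_slope_of_hasDerivAt (Set.mem_univ (0:ℝ)) (Set.mem_univ (1:ℝ))
    one_pos hg0
  have : (inner ℝ (gradient f y) v : ℝ) ≤ g 1 - g 0 := by
    simpa [slope, sub_zero] using hslope
  have hg1 : g 1 = f x := by simp [g, hv]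
  have hg0' : g 0 = f y := by simp [g]
  linarith [this, hg1.le]

theorem weak_efficiency_from_stationarity {n m p : ℕ}
    (h : Fin (m + 1) → Fin (p + 1) → EuclideanSpace ℝ (Fin n) → ℝ)
    (hdiff : ∀ j i, ContDiff ℝ 1 (h j i))
    (hconv : ∀ j i, ConvexOn ℝ Set.univ (h j i))
    (H : Fin (m + 1) → EuclideanSpace ℝ (Fin n) → ℝ)
    (hH : ∀ j y, H j y = Finset.univ.sup' Finset.univ_nonempty (fun i => h j i y))
    (D : Set (EuclideanSpace ℝ (Fin n))) (hDconv : Convex ℝ D)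
    (xstar : EuclideanSpace ℝ (Fin n)) (hx : xstar ∈ D)
    (j₀ : Fin (m + 1))
    (hstat : ∀ x ∈ D, ∀ i, h j₀ i xstar = H j₀ xstar →
      0 ≤ (inner ℝ (gradient (h j₀ i) xstar) (x - xstar) : ℝ)) :
    ¬ ∃ x ∈ D, ∀ j, H j x < H j xstar := by
  rintro ⟨x, hxD, hlt⟩
  -- pick an active index i at xstar for j₀
  obtain ⟨i, -, hi⟩ := Finset.exists_mem_eq_sup' (Finset.univ_nonempty)
    (fun i => h j₀ i xstar)
  have hact : h j₀ i xstar = H j₀ xstar := by rw [hH]; exact hi.symm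
  have hgradpos := hstat x hxD i hact
  have hineq := convex_gradient_ineq (hconv j₀ i)
    ((hdiff j₀ i).differentiable one_ne_zero xstar) x
  have h1 : H j₀ xstar ≤ h j₀ i x := by
    calc H j₀ xstar = h j₀ i xstar := hact.symm
      _ ≤ h j₀ i xstar + (inner ℝ (gradient (h j₀ i) xstar) (x - xstar) : ℝ) := by linarith
      _ ≤ h j₀ i x := hineq
  have h2 : h j₀ i x ≤ H j₀ x := by
    rw [hH]
    exact Finset.le_sup' (fun i => h j₀ i x) (Finset.mem_univ i)
  exact absurd (hlt j₀) (not_lt.mpr (h1.trans h2))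
end

section
/- Let D ⊆ ℝ^n be closed and convex, h_{ij} continuously differentiable, H_j(x) = max_i h_{ij}(x), β > 0, Θ_x(t) = max_{j,i} (h_{ij}(x) + ⟨∇h_{ij}(x), t⟩ − H_j(x)), and Ω(x) = min_{t ∈ D−x}(β Θ_x(t) + (1/2)‖t‖²). Then Ω : D → ℝ is continuous. -/
set_option maxHeartbeats 1000000 in
theorem Omega_continuous {n m p : ℕ}
    (h : Fin (m + 1) → Fin (p + 1) → EuclideanSpace ℝ (Fin n) → ℝ)
    (hdiff : ∀ j i, ContDiff ℝ 1 (h j i))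
    (H : Fin (m + 1) → EuclideanSpace ℝ (Fin n) → ℝ)
    (hH : ∀ j y, H j y = Finset.univ.sup' Finset.univ_nonempty (fun i => h j i y))
    (D : Set (EuclideanSpace ℝ (Fin n)))
    (hDclosed : IsClosed D) (hDconv : Convex ℝ D)
    (β : ℝ) (hβ : 0 < β)
    (Θ : EuclideanSpace ℝ (Fin n) → EuclideanSpace ℝ (Fin n) → ℝ)
    (hΘ : ∀ x t, Θ x t = Finset.univ.sup' Finset.univ_nonempty
      (fun ji : Fin (m + 1) × Fin (p + 1) =>
        h ji.1 ji.2 x + (inner ℝ (gradient (h ji.1 ji.2) x) t : ℝ) - H ji.1 x))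
    (Ω : EuclideanSpace ℝ (Fin n) → ℝ)
    (hΩ : ∀ x, Ω x = sInf ((fun t => β * Θ x t + (1 / 2) * ‖t‖ ^ 2) ''
      ((fun d => d - x) '' D))) :
    ContinuousOn Ω D := by
  classical
  have hgc : ∀ (j : Fin (m+1)) (i : Fin (p+1)), Continuous (fun x => gradient (h j i) x) := by
    intro j i
    exact (InnerProductSpace.toDual ℝ _).symm.continuous.comp
      ((hdiff j i).continuous_fderiv one_ne_zero)
  have hhc : ∀ j i, Continuous (h j i) := fun j i => (hdiff j i).continuous
  have hHc : ∀ j, Continuous (H j) := by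
    intro j
    have hfun : H j = fun y => Finset.univ.sup' Finset.univ_nonempty (fun i => h j i y) :=
      funext (hH j)
    rw [hfun]
    exact Continuous.finset_sup'_apply Finset.univ_nonempty (fun i _ => hhc j i)
  have hΘc : Continuous (fun q : EuclideanSpace ℝ (Fin n) × EuclideanSpace ℝ (Fin n) =>
      Θ q.1 q.2) := by
    have hfun : (fun q : EuclideanSpace ℝ (Fin n) × EuclideanSpace ℝ (Fin n) => Θ q.1 q.2)
        = fun q : EuclideanSpace ℝ (Fin n) × EuclideanSpace ℝ (Fin n) =>
        Finset.univ.sup' Finset.univ_nonempty (fun ji : Fin (m+1) × Fin (p+1) =>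
          h ji.1 ji.2 q.1 + (inner ℝ (gradient (h ji.1 ji.2) q.1) q.2 : ℝ) - H ji.1 q.1) :=
      funext fun q => hΘ q.1 q.2
    rw [hfun]
    refine Continuous.finset_sup'_apply Finset.univ_nonempty (fun ji _ => ?_)
    refine (((hhc ji.1 ji.2).comp continuous_fst).add ?_).sub ((hHc ji.1).comp continuous_fst)
    exact Continuous.inner ((hgc ji.1 ji.2).comp continuous_fst) continuous_snd
  have hΘ0 : ∀ x, Θ x 0 ≤ 0 := by
    intro x
    rw [hΘ]
    refine Finset.sup'_le Finset.univ_nonempty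
      (fun ji : Fin (m+1) × Fin (p+1) =>
        h ji.1 ji.2 x + (inner ℝ (gradient (h ji.1 ji.2) x) (0 : EuclideanSpace ℝ (Fin n)) : ℝ)
          - H ji.1 x) (fun ji _ => ?_)
    have h1 : h ji.1 ji.2 x ≤ H ji.1 x := by
      rw [hH]; exact Finset.le_sup' (fun i => h ji.1 i x) (Finset.mem_univ ji.2)
    simp only [inner_zero_right]
    linarith
  have hΘlb : ∀ (x t : EuclideanSpace ℝ (Fin n)) (M : ℝ),
      (∀ ji : Fin (m+1) × Fin (p+1), ‖gradient (h ji.1 ji.2) x‖ ≤ M) →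
      -(M * ‖t‖) ≤ Θ x t := by
    intro x t M hM
    obtain ⟨i, -, hi⟩ := Finset.exists_mem_eq_sup' Finset.univ_nonempty (fun i => h 0 i x)
    rw [hΘ]
    refine le_trans ?_ (Finset.le_sup'
      (fun ji : Fin (m+1) × Fin (p+1) =>
        h ji.1 ji.2 x + (inner ℝ (gradient (h ji.1 ji.2) x) t : ℝ) - H ji.1 x)
      (Finset.mem_univ ((0 : Fin (m+1)), i)))
    simp only
    rw [hH 0 x, hi]
    have h1 : -(‖gradient (h 0 i) x‖ * ‖t‖) ≤ (inner ℝ (gradient (h 0 i) x) t : ℝ) :=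
      neg_le_of_abs_le (abs_real_inner_le_norm _ _)
    have h2 : ‖gradient (h 0 i) x‖ * ‖t‖ ≤ M * ‖t‖ :=
      mul_le_mul_of_nonneg_right (hM (0, i)) (norm_nonneg t)
    linarith
  have gbd : ∀ (x : EuclideanSpace ℝ (Fin n)) (M : ℝ), 0 ≤ M →
      (∀ ji : Fin (m+1) × Fin (p+1), ‖gradient (h ji.1 ji.2) x‖ ≤ M) →
      ∀ v ∈ (fun t => β * Θ x t + (1 / 2) * ‖t‖ ^ 2) '' ((fun d => d - x) '' D),
      -(β*M)^2/2 ≤ v := by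
    rintro x M hM0 hM v ⟨t, ⟨d, hd, rfl⟩, rfl⟩
    have h1 := hΘlb x (d - x) M hM
    have h2 : β * (-(M * ‖d - x‖)) ≤ β * Θ x (d - x) := mul_le_mul_of_nonneg_left h1 hβ.le
    nlinarith [norm_nonneg (d - x), sq_nonneg (‖d - x‖ - β*M)]
  intro x₀ hx₀D
  have key : ∀ ε > (0:ℝ), ∀ᶠ x in nhdsWithin x₀ D, dist (Ω x) (Ω x₀) < ε := by
    intro ε hε
    have hε₁ : (0:ℝ) < min ε 1 := lt_min hε one_pos
    have hε₁1 : min ε 1 ≤ 1 := min_le_right ε 1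
    refine Filter.Eventually.mono ?_ (fun x hx => lt_of_lt_of_le hx (min_le_left ε 1))
    set ε₁ := min ε 1 with hε₁def
    -- M and R
    set M : ℝ := Finset.univ.sup' Finset.univ_nonempty
        (fun ji : Fin (m+1) × Fin (p+1) => ‖gradient (h ji.1 ji.2) x₀‖) + 1 with hMdef
    have hMx₀ : ∀ ji : Fin (m+1) × Fin (p+1), ‖gradient (h ji.1 ji.2) x₀‖ + 1 ≤ M := by
      intro ji
      have h1 := Finset.le_sup'
        (fun ji : Fin (m+1) × Fin (p+1) => ‖gradient (h ji.1 ji.2) x₀‖) (Finset.mem_univ ji)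
      rw [hMdef]; linarith
    have hM1 : 1 ≤ M := by
      have := hMx₀ ((0 : Fin (m+1)), (0 : Fin (p+1)))
      have h2 := norm_nonneg (gradient (h 0 0) x₀)
      linarith
    have hMx₀' : ∀ ji : Fin (m+1) × Fin (p+1), ‖gradient (h ji.1 ji.2) x₀‖ ≤ M :=
      fun ji => by linarith [hMx₀ ji]
    set R : ℝ := 2 + 2 * (β * M) with hRdef
    have hβM : 0 < β * M := mul_pos hβ (by linarith)
    have hR0 : 0 < R := by rw [hRdef]; linarith
    -- the error function S
    set S : EuclideanSpace ℝ (Fin n) → ℝ := fun x => Finset.univ.sup' Finset.univ_nonempty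
        (fun ji : Fin (m+1) × Fin (p+1) =>
          |h ji.1 ji.2 x₀ - h ji.1 ji.2 x| + |H ji.1 x - H ji.1 x₀| +
          ‖gradient (h ji.1 ji.2) x₀ - gradient (h ji.1 ji.2) x‖ * R +
          ‖gradient (h ji.1 ji.2) x₀‖ * ‖x - x₀‖) with hSdef
    clear_value S R M ε₁
    have hSc : Continuous S := by
      rw [hSdef]
      refine Continuous.finset_sup'_apply Finset.univ_nonempty (fun ji _ => ?_)
      refine (((continuous_const.sub (hhc ji.1 ji.2)).abs.add
        ((hHc ji.1).sub continuous_const).abs).add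
        ((continuous_const.sub (hgc ji.1 ji.2)).norm.mul continuous_const)).add
        (continuous_const.mul (continuous_id.sub continuous_const).norm)
    have hS0 : S x₀ = 0 := by
      rw [hSdef]
      simp only
      refine le_antisymm (Finset.sup'_le Finset.univ_nonempty
        (fun ji : Fin (m+1) × Fin (p+1) =>
          |h ji.1 ji.2 x₀ - h ji.1 ji.2 x₀| + |H ji.1 x₀ - H ji.1 x₀| +
          ‖gradient (h ji.1 ji.2) x₀ - gradient (h ji.1 ji.2) x₀‖ * R +
          ‖gradient (h ji.1 ji.2) x₀‖ * ‖x₀ - x₀‖) (fun ji _ => by simp)) ?_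
      refine le_trans (le_of_eq ?_) (Finset.le_sup'
        (fun ji : Fin (m+1) × Fin (p+1) =>
          |h ji.1 ji.2 x₀ - h ji.1 ji.2 x₀| + |H ji.1 x₀ - H ji.1 x₀| +
          ‖gradient (h ji.1 ji.2) x₀ - gradient (h ji.1 ji.2) x₀‖ * R +
          ‖gradient (h ji.1 ji.2) x₀‖ * ‖x₀ - x₀‖)
        (Finset.mem_univ ((0 : Fin (m+1)), (0 : Fin (p+1)))))
      simp
    -- eventual facts
    have ev1 : ∀ᶠ x in nhdsWithin x₀ D, x ∈ D := eventually_mem_nhdsWithin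
    have ev2 : ∀ᶠ x in nhdsWithin x₀ D,
        ∀ ji : Fin (m+1) × Fin (p+1), ‖gradient (h ji.1 ji.2) x‖ ≤ M := by
      have hcc : Continuous fun x : EuclideanSpace ℝ (Fin n) =>
          Finset.univ.sup' Finset.univ_nonempty
          (fun ji : Fin (m+1) × Fin (p+1) => ‖gradient (h ji.1 ji.2) x‖) :=
        Continuous.finset_sup'_apply Finset.univ_nonempty (fun ji _ => (hgc ji.1 ji.2).norm)
      have h1 : Finset.univ.sup' Finset.univ_nonempty
          (fun ji : Fin (m+1) × Fin (p+1) => ‖gradient (h ji.1 ji.2) x₀‖) < M := by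
        rw [hMdef]; linarith
      have h2 := (hcc.tendsto x₀).eventually_lt_const h1
      refine Filter.Eventually.filter_mono nhdsWithin_le_nhds (h2.mono ?_)
      intro x hx ji
      exact le_trans (Finset.le_sup'
        (fun ji : Fin (m+1) × Fin (p+1) => ‖gradient (h ji.1 ji.2) x‖) (Finset.mem_univ ji)) hx.le
    have ev3 : ∀ᶠ x in nhdsWithin x₀ D, β * S x + (R + 1/2) * ‖x - x₀‖ < ε₁/2 := by
      have hc : Continuous fun x : EuclideanSpace ℝ (Fin n) =>
          β * S x + (R + 1/2) * ‖x - x₀‖ :=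
        (continuous_const.mul hSc).add
          (continuous_const.mul (continuous_id.sub continuous_const).norm)
      have h1 : β * S x₀ + (R + 1/2) * ‖x₀ - x₀‖ < ε₁/2 := by
        rw [hS0]; simp; linarith
      have h2 := (hc.tendsto x₀).eventually_lt_const h1
      exact Filter.Eventually.filter_mono nhdsWithin_le_nhds h2
    have ev4 : ∀ᶠ x in nhdsWithin x₀ D, ‖x - x₀‖ ≤ 1 := by
      have h2 : ∀ᶠ x in nhds x₀, dist x x₀ < 1 :=
        Metric.eventually_nhds_iff_ball.mpr ⟨1, one_pos, fun y hy => hy⟩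
      refine Filter.Eventually.filter_mono nhdsWithin_le_nhds (h2.mono ?_)
      intro x hx
      rw [← dist_eq_norm]; exact hx.le
    -- direction A witness
    have hne₀ : ((fun t => β * Θ x₀ t + (1 / 2) * ‖t‖ ^ 2) ''
        ((fun d => d - x₀) '' D)).Nonempty :=
      ⟨_, ⟨x₀ - x₀, ⟨x₀, hx₀D, rfl⟩, rfl⟩⟩
    have hlt : sInf ((fun t => β * Θ x₀ t + (1 / 2) * ‖t‖ ^ 2) '' ((fun d => d - x₀) '' D))
        < Ω x₀ + ε₁ := by rw [← hΩ]; linarith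
    obtain ⟨v, hvmem, hv⟩ := exists_lt_of_csInf_lt hne₀ hlt
    obtain ⟨t₀, ht₀mem, rfl⟩ := hvmem
    obtain ⟨d₀, hd₀, rfl⟩ := ht₀mem
    have hφc : Continuous fun y : EuclideanSpace ℝ (Fin n) =>
        β * Θ y (d₀ - y) + (1 / 2) * ‖d₀ - y‖ ^ 2 := by
      have h1 : Continuous fun y : EuclideanSpace ℝ (Fin n) => Θ y (d₀ - y) :=
        hΘc.comp (continuous_id.prodMk (continuous_const.sub continuous_id))
      exact (continuous_const.mul h1).add
        (continuous_const.mul ((continuous_const.sub continuous_id).norm.pow 2))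
    have ev5 : ∀ᶠ x in nhdsWithin x₀ D,
        β * Θ x (d₀ - x) + (1 / 2) * ‖d₀ - x‖ ^ 2 < Ω x₀ + ε₁ :=
      Filter.Eventually.filter_mono nhdsWithin_le_nhds
        ((hφc.tendsto x₀).eventually_lt_const hv)
    filter_upwards [ev1, ev2, ev3, ev4, ev5] with x hxD hMx hErr hx1 hφ
    rw [Real.dist_eq, abs_sub_lt_iff]
    have hbdd : BddBelow ((fun t => β * Θ x t + (1 / 2) * ‖t‖ ^ 2) ''
        ((fun d => d - x) '' D)) :=
      ⟨-(β*M)^2/2, fun v hv => gbd x M (by linarith) hMx v hv⟩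
    have hbdd₀ : BddBelow ((fun t => β * Θ x₀ t + (1 / 2) * ‖t‖ ^ 2) ''
        ((fun d => d - x₀) '' D)) :=
      ⟨-(β*M)^2/2, fun v hv => gbd x₀ M (by linarith) hMx₀' v hv⟩
    constructor
    · -- Ω x < Ω x₀ + ε₁
      have hmem : β * Θ x (d₀ - x) + (1 / 2) * ‖d₀ - x‖ ^ 2 ∈
          (fun t => β * Θ x t + (1 / 2) * ‖t‖ ^ 2) '' ((fun d => d - x) '' D) :=
        ⟨d₀ - x, ⟨d₀, hd₀, rfl⟩, rfl⟩
      have h1 : Ω x ≤ β * Θ x (d₀ - x) + (1 / 2) * ‖d₀ - x‖ ^ 2 := by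
        rw [hΩ]; exact csInf_le hbdd hmem
      linarith
    · -- Ω x₀ < Ω x + ε₁
      have hmem0 : β * Θ x (x - x) + (1 / 2) * ‖x - x‖ ^ 2 ∈
          (fun t => β * Θ x t + (1 / 2) * ‖t‖ ^ 2) '' ((fun d => d - x) '' D) :=
        ⟨x - x, ⟨x, hxD, rfl⟩, rfl⟩
      have hΩx0 : Ω x ≤ 0 := by
        have h1 : Ω x ≤ β * Θ x (x - x) + (1 / 2) * ‖x - x‖ ^ 2 := by
          rw [hΩ]; exact csInf_le hbdd hmem0
        rw [sub_self] at h1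
        simp only [norm_zero] at h1
        nlinarith [hΘ0 x]
      have hnex : ((fun t => β * Θ x t + (1 / 2) * ‖t‖ ^ 2) ''
          ((fun d => d - x) '' D)).Nonempty := ⟨_, hmem0⟩
      have hlt2 : sInf ((fun t => β * Θ x t + (1 / 2) * ‖t‖ ^ 2) ''
          ((fun d => d - x) '' D)) < Ω x + ε₁/2 := by rw [← hΩ]; linarith
      obtain ⟨w, hwmem, hw⟩ := exists_lt_of_csInf_lt hnex hlt2
      obtain ⟨t, htmem, rfl⟩ := hwmem
      obtain ⟨d, hd, rfl⟩ := htmem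
      simp only at hw
      have hΘl := hΘlb x (d - x) M hMx
      have hβΘ : β * (-(M * ‖d - x‖)) ≤ β * Θ x (d - x) := mul_le_mul_of_nonneg_left hΘl hβ.le
      have htR : ‖d - x‖ ≤ R := by
        by_contra hc
        push_neg at hc
        rw [hRdef] at hc
        have hupos : (0:ℝ) < ‖d - x‖ := lt_trans hR0 (hRdef ▸ hc)
        nlinarith [mul_lt_mul_of_pos_right hc hupos]
      -- key comparison of Θ values
      have hkey : Θ x₀ (d - x₀) ≤ Θ x (d - x) + S x := by
        obtain ⟨ji, -, hji⟩ := Finset.exists_mem_eq_sup' Finset.univ_nonempty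
          (fun ji : Fin (m+1) × Fin (p+1) =>
            h ji.1 ji.2 x₀ + (inner ℝ (gradient (h ji.1 ji.2) x₀) (d - x₀) : ℝ) - H ji.1 x₀)
        rw [hΘ x₀ (d - x₀), hji]
        have hterm : h ji.1 ji.2 x + (inner ℝ (gradient (h ji.1 ji.2) x) (d - x) : ℝ) - H ji.1 x
            ≤ Θ x (d - x) := by
          rw [hΘ]
          exact Finset.le_sup' (fun ji : Fin (m+1) × Fin (p+1) =>
            h ji.1 ji.2 x + (inner ℝ (gradient (h ji.1 ji.2) x) (d - x) : ℝ) - H ji.1 x)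
            (Finset.mem_univ ji)
        have hterm2 : |h ji.1 ji.2 x₀ - h ji.1 ji.2 x| + |H ji.1 x - H ji.1 x₀| +
            ‖gradient (h ji.1 ji.2) x₀ - gradient (h ji.1 ji.2) x‖ * R +
            ‖gradient (h ji.1 ji.2) x₀‖ * ‖x - x₀‖ ≤ S x := by
          rw [hSdef]
          exact Finset.le_sup' (fun ji : Fin (m+1) × Fin (p+1) =>
            |h ji.1 ji.2 x₀ - h ji.1 ji.2 x| + |H ji.1 x - H ji.1 x₀| +
            ‖gradient (h ji.1 ji.2) x₀ - gradient (h ji.1 ji.2) x‖ * R +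
            ‖gradient (h ji.1 ji.2) x₀‖ * ‖x - x₀‖) (Finset.mem_univ ji)
        have hd_split : d - x₀ = (d - x) + (x - x₀) := by abel
        have hi1 : (inner ℝ (gradient (h ji.1 ji.2) x₀) (d - x₀) : ℝ)
            = (inner ℝ (gradient (h ji.1 ji.2) x₀) (d - x) : ℝ)
              + (inner ℝ (gradient (h ji.1 ji.2) x₀) (x - x₀) : ℝ) := by
          rw [hd_split, inner_add_right]
        have hi2 : (inner ℝ (gradient (h ji.1 ji.2) x₀) (d - x) : ℝ)
            - (inner ℝ (gradient (h ji.1 ji.2) x) (d - x) : ℝ)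
            ≤ ‖gradient (h ji.1 ji.2) x₀ - gradient (h ji.1 ji.2) x‖ * R := by
          have hcs := real_inner_le_norm
            (gradient (h ji.1 ji.2) x₀ - gradient (h ji.1 ji.2) x) (d - x)
          rw [inner_sub_left] at hcs
          have h2 : ‖gradient (h ji.1 ji.2) x₀ - gradient (h ji.1 ji.2) x‖ * ‖d - x‖
              ≤ ‖gradient (h ji.1 ji.2) x₀ - gradient (h ji.1 ji.2) x‖ * R :=
            mul_le_mul_of_nonneg_left htR (norm_nonneg _)
          linarith
        have hi3 : (inner ℝ (gradient (h ji.1 ji.2) x₀) (x - x₀) : ℝ)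
            ≤ ‖gradient (h ji.1 ji.2) x₀‖ * ‖x - x₀‖ := real_inner_le_norm _ _
        have hh1 : h ji.1 ji.2 x₀ - h ji.1 ji.2 x ≤ |h ji.1 ji.2 x₀ - h ji.1 ji.2 x| :=
          le_abs_self _
        have hH1 : H ji.1 x - H ji.1 x₀ ≤ |H ji.1 x - H ji.1 x₀| := le_abs_self _
        linarith
      have hnorm : ‖d - x₀‖^2 ≤ ‖d - x‖^2 + (2*R + 1) * ‖x - x₀‖ := by
        have h1 : ‖d - x₀‖ ≤ ‖d - x‖ + ‖x - x₀‖ := by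
          calc ‖d - x₀‖ = ‖(d - x) + (x - x₀)‖ := by rw [sub_add_sub_cancel]
          _ ≤ _ := norm_add_le _ _
        nlinarith [mul_self_le_mul_self (norm_nonneg (d - x₀)) h1, htR, hx1,
          norm_nonneg (x - x₀), norm_nonneg (d - x), hR0]
      have hmem₀ : β * Θ x₀ (d - x₀) + (1 / 2) * ‖d - x₀‖ ^ 2 ∈
          (fun t => β * Θ x₀ t + (1 / 2) * ‖t‖ ^ 2) '' ((fun d => d - x₀) '' D) :=
        ⟨d - x₀, ⟨d, hd, rfl⟩, rfl⟩
      have hΩ₀le : Ω x₀ ≤ β * Θ x₀ (d - x₀) + (1 / 2) * ‖d - x₀‖ ^ 2 := by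
        rw [hΩ]; exact csInf_le hbdd₀ hmem₀
      have hβS := mul_le_mul_of_nonneg_left hkey hβ.le
      rw [mul_add] at hβS
      have hhalf : (1/2:ℝ) * ‖d - x₀‖ ^ 2 ≤ 1/2 * ‖d - x‖ ^ 2 + (R + 1/2) * ‖x - x₀‖ := by
        linarith
      linarith [hΩ₀le, hβS, hhalf, hw, hErr]
  exact Metric.tendsto_nhds.mpr key
end

section
/- Under the setting of the search-direction subproblem (D closed convex, h_{ij} continuously differentiable, β > 0, Θ_x and Ω as above, t(x) the unique minimizer of βΘ_x(t) + (1/2)‖t‖² over D − x): x ∈ D is not Pareto critical for H if and only if Ω(x) < 0; equivalently, x is Pareto critical if and only if Ω(x) = 0 if and only if t(x) = 0. -/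
set_option maxHeartbeats 1600000 in
theorem pareto_critical_characterization {n m p : ℕ}
    (h : Fin (m + 1) → Fin (p + 1) → EuclideanSpace ℝ (Fin n) → ℝ)
    (hdiff : ∀ j i, ContDiff ℝ 1 (h j i))
    (H : Fin (m + 1) → EuclideanSpace ℝ (Fin n) → ℝ)
    (hH : ∀ j y, H j y = Finset.univ.sup' Finset.univ_nonempty (fun i => h j i y))
    (D : Set (EuclideanSpace ℝ (Fin n)))
    (hDclosed : IsClosed D) (hDconv : Convex ℝ D)
    (β : ℝ) (hβ : 0 < β)
    (Θ : EuclideanSpace ℝ (Fin n) → EuclideanSpace ℝ (Fin n) → ℝ)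
    (hΘ : ∀ x t, Θ x t = Finset.univ.sup' Finset.univ_nonempty
      (fun ji : Fin (m + 1) × Fin (p + 1) =>
        h ji.1 ji.2 x + (inner ℝ (gradient (h ji.1 ji.2) x) t : ℝ) - H ji.1 x))
    (x : EuclideanSpace ℝ (Fin n)) (hx : x ∈ D)
    (t : EuclideanSpace ℝ (Fin n)) (htmem : x + t ∈ D)
    (hmin : ∀ s : EuclideanSpace ℝ (Fin n), x + s ∈ D →
      β * Θ x t + (1 / 2) * ‖t‖ ^ 2 ≤ β * Θ x s + (1 / 2) * ‖s‖ ^ 2)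
    (Ωx : ℝ) (hΩx : Ωx = β * Θ x t + (1 / 2) * ‖t‖ ^ 2) :
    ((¬ ∃ v : EuclideanSpace ℝ (Fin n), x + v ∈ D ∧
        ∀ j i, h j i x = H j x → (inner ℝ (gradient (h j i) x) v : ℝ) < 0) ↔
      Ωx = 0) ∧
    ((∃ v : EuclideanSpace ℝ (Fin n), x + v ∈ D ∧
        ∀ j i, h j i x = H j x → (inner ℝ (gradient (h j i) x) v : ℝ) < 0) ↔
      Ωx < 0) ∧
    ((¬ ∃ v : EuclideanSpace ℝ (Fin n), x + v ∈ D ∧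
        ∀ j i, h j i x = H j x → (inner ℝ (gradient (h j i) x) v : ℝ) < 0) ↔
      t = 0) := by
  -- basic facts
  have hA_le : ∀ j i, h j i x ≤ H j x := fun j i => by
    rw [hH]; exact Finset.le_sup' (fun i => h j i x) (Finset.mem_univ i)
  have hactive : ∀ j, ∃ i, h j i x = H j x := fun j => by
    obtain ⟨i, _, hi⟩ := Finset.exists_mem_eq_sup' Finset.univ_nonempty (fun i => h j i x)
    exact ⟨i, by rw [hH, ← hi]⟩
  have hΘ0 : Θ x 0 = 0 := by
    rw [hΘ]
    apply le_antisymm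
    · apply Finset.sup'_le
      intro ji _
      have := hA_le ji.1 ji.2
      simp only [inner_zero_right]
      linarith
    · obtain ⟨i, hi⟩ := hactive 0
      have hle := Finset.le_sup'
        (f := fun ji : Fin (m + 1) × Fin (p + 1) =>
          h ji.1 ji.2 x + (inner ℝ (gradient (h ji.1 ji.2) x) (0 : EuclideanSpace ℝ (Fin n)) : ℝ)
            - H ji.1 x) (Finset.mem_univ ((0 : Fin (m+1)), i))
      simp only [inner_zero_right] at hle
      simp only [inner_zero_right]
      exact le_trans (le_of_eq (by simp [hi])) hle
  have hΩle : Ωx ≤ 0 := by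
    have := hmin 0 (by simpa using hx)
    rw [hΩx]
    simpa [hΘ0] using this
  -- descent direction implies Ωx < 0
  have hPneg : (∃ v : EuclideanSpace ℝ (Fin n), x + v ∈ D ∧
      ∀ j i, h j i x = H j x → (inner ℝ (gradient (h j i) x) v : ℝ) < 0) → Ωx < 0 := by
    rintro ⟨v, hvD, hv⟩
    set c : Fin (m + 1) × Fin (p + 1) → ℝ :=
      fun ji => (inner ℝ (gradient (h ji.1 ji.2) x) v : ℝ) with hc
    set K : ℝ := ‖v‖ ^ 2 / 2 with hKdef
    have hK : 0 ≤ K := by positivity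
    set r : Fin (m + 1) × Fin (p + 1) → ℝ := fun ji =>
      if h ji.1 ji.2 x = H ji.1 x then (-(β * c ji)) / (K + 1)
      else (β * (H ji.1 x - h ji.1 ji.2 x)) / (β * |c ji| + K + 1) with hr
    have hrpos : ∀ ji, 0 < r ji := by
      intro ji
      by_cases hcase : h ji.1 ji.2 x = H ji.1 x
      · have hcneg := hv ji.1 ji.2 hcase
        simp only [hr, if_pos hcase]
        apply div_pos (by nlinarith) (by linarith)
      · have hlt := lt_of_le_of_ne (hA_le ji.1 ji.2) hcase
        simp only [hr, if_neg hcase]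
        apply div_pos (by nlinarith) (by positivity)
    set τ : ℝ := min 1 (Finset.univ.inf' Finset.univ_nonempty r) with hτdef
    have hτpos : 0 < τ :=
      lt_min one_pos (by rw [Finset.lt_inf'_iff]; exact fun y _ => hrpos y)
    have hτ1 : τ ≤ 1 := min_le_left _ _
    have hτr : ∀ ji, τ ≤ r ji := fun ji =>
      le_trans (min_le_right _ _) (Finset.inf'_le _ (Finset.mem_univ ji))
    have hmem : x + τ • v ∈ D := by
      have hcomb := hDconv hx hvD (by linarith : (0:ℝ) ≤ 1 - τ) hτpos.le (by ring)
      have heq : (1 - τ) • x + τ • (x + v) = x + τ • v := by module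
      rwa [heq] at hcomb
    have hterm : ∀ ji : Fin (m + 1) × Fin (p + 1),
        h ji.1 ji.2 x + (inner ℝ (gradient (h ji.1 ji.2) x) (τ • v) : ℝ) - H ji.1 x
          < -(τ ^ 2 * K) / β := by
      intro ji
      have hin : (inner ℝ (gradient (h ji.1 ji.2) x) (τ • v) : ℝ) = τ * c ji :=
        real_inner_smul_right _ _ _
      rw [hin, lt_div_iff₀ hβ]
      by_cases hcase : h ji.1 ji.2 x = H ji.1 x
      · have hcneg := hv ji.1 ji.2 hcase
        have hrji := hτr ji
        simp only [hr, if_pos hcase] at hrji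
        have h1 : τ * (K + 1) ≤ -(β * c ji) := by
          rw [le_div_iff₀ (by linarith : (0:ℝ) < K + 1)] at hrji
          exact hrji
        have hlt2 : β * c ji + τ * K < 0 := by nlinarith [h1]
        have hfin := mul_lt_mul_of_pos_left hlt2 hτpos
        rw [hcase]
        nlinarith [hfin]
      · have hlt := lt_of_le_of_ne (hA_le ji.1 ji.2) hcase
        have hrji := hτr ji
        simp only [hr, if_neg hcase] at hrji
        have hd : (0:ℝ) < β * |c ji| + K + 1 := by positivity
        have h1 : τ * (β * |c ji| + K + 1) ≤ β * (H ji.1 x - h ji.1 ji.2 x) := by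
          rw [le_div_iff₀ hd] at hrji
          exact hrji
        have hca : c ji ≤ |c ji| := le_abs_self _
        have hτsq : τ ^ 2 ≤ τ := by nlinarith
        have hf1 : τ * (β * c ji) ≤ τ * (β * |c ji|) :=
          mul_le_mul_of_nonneg_left (by nlinarith [hca]) hτpos.le
        have hf2 : τ ^ 2 * K ≤ τ * K := mul_le_mul_of_nonneg_right hτsq hK
        nlinarith [abs_nonneg (c ji), hf1, hf2, h1]
    have hΘτ : Θ x (τ • v) < -(τ ^ 2 * K) / β := by
      rw [hΘ, Finset.sup'_lt_iff]
      exact fun ji _ => hterm ji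
    have hub := hmin (τ • v) hmem
    have hns : ‖τ • v‖ ^ 2 = τ ^ 2 * ‖v‖ ^ 2 := by
      rw [norm_smul, Real.norm_eq_abs, abs_of_pos hτpos, mul_pow]
    have h2 : β * Θ x (τ • v) < -(τ ^ 2 * K) := by
      have := mul_lt_mul_of_pos_left hΘτ hβ
      rwa [mul_div_cancel₀ _ (ne_of_gt hβ)] at this
    rw [hΩx]
    rw [hns] at hub
    have h2' : β * Θ x (τ • v) < -(τ ^ 2 * (‖v‖ ^ 2 / 2)) := by rw [← hKdef]; exact h2
    linarith
  -- Ωx < 0 implies descent direction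
  have hPpos : Ωx < 0 → ∃ v : EuclideanSpace ℝ (Fin n), x + v ∈ D ∧
      ∀ j i, h j i x = H j x → (inner ℝ (gradient (h j i) x) v : ℝ) < 0 := by
    intro hΩlt
    refine ⟨t, htmem, fun j i hji => ?_⟩
    have hΘt : Θ x t < 0 := by
      rw [hΩx] at hΩlt
      have hq := sq_nonneg ‖t‖
      have h5 : β * Θ x t < 0 := by linarith
      by_contra hge
      exact absurd h5 (not_lt.mpr (mul_nonneg hβ.le (not_lt.mp hge)))
    have hle : h j i x + (inner ℝ (gradient (h j i) x) t : ℝ) - H j x ≤ Θ x t := by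
      rw [hΘ]
      exact Finset.le_sup'
        (f := fun ji : Fin (m + 1) × Fin (p + 1) =>
          h ji.1 ji.2 x + (inner ℝ (gradient (h ji.1 ji.2) x) t : ℝ) - H ji.1 x)
        (Finset.mem_univ (j, i))
    rw [hji] at hle
    linarith
  -- Ωx = 0 implies t = 0
  have ht0 : Ωx = 0 → t = 0 := by
    intro h0
    by_contra hne
    have hmem2 : x + (1/2 : ℝ) • t ∈ D := by
      have hcomb := hDconv hx htmem (by norm_num : (0:ℝ) ≤ 1/2) (by norm_num : (0:ℝ) ≤ 1/2)
        (by norm_num)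
      have heq : (1/2 : ℝ) • x + (1/2 : ℝ) • (x + t) = x + (1/2 : ℝ) • t := by module
      rwa [heq] at hcomb
    have hle : ∀ ji : Fin (m + 1) × Fin (p + 1),
        h ji.1 ji.2 x + (inner ℝ (gradient (h ji.1 ji.2) x) t : ℝ) - H ji.1 x ≤ Θ x t := by
      intro ji
      rw [hΘ]
      exact Finset.le_sup'
        (f := fun ji : Fin (m + 1) × Fin (p + 1) =>
          h ji.1 ji.2 x + (inner ℝ (gradient (h ji.1 ji.2) x) t : ℝ) - H ji.1 x)
        (Finset.mem_univ ji)
    have hΘhalf : Θ x ((1/2 : ℝ) • t) ≤ Θ x t / 2 := by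
      conv_lhs => rw [hΘ]
      apply Finset.sup'_le
      intro ji _
      have hin : (inner ℝ (gradient (h ji.1 ji.2) x) ((1/2 : ℝ) • t) : ℝ)
          = (1/2 : ℝ) * (inner ℝ (gradient (h ji.1 ji.2) x) t : ℝ) :=
        real_inner_smul_right _ _ _
      rw [hin]
      have h1 := hle ji
      have h2 := hA_le ji.1 ji.2
      linarith
    have hq := hmin ((1/2 : ℝ) • t) hmem2
    have hns : ‖(1/2 : ℝ) • t‖ ^ 2 = (1/4 : ℝ) * ‖t‖ ^ 2 := by
      rw [norm_smul, Real.norm_eq_abs, mul_pow]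
      norm_num
    rw [hns] at hq
    rw [hΩx] at h0
    have h3 : β * Θ x ((1/2 : ℝ) • t) ≤ β * (Θ x t / 2) :=
      mul_le_mul_of_nonneg_left hΘhalf hβ.le
    have hsq : ‖t‖ ^ 2 ≤ 0 := by linarith
    have h4 : ‖t‖ ^ 2 = 0 := le_antisymm hsq (sq_nonneg _)
    exact hne (norm_eq_zero.mp ((pow_eq_zero_iff two_ne_zero).mp h4))
  have h0t : t = 0 → Ωx = 0 := by
    intro ht
    rw [hΩx, ht, hΘ0]
    simp
  constructor
  · constructor
    · intro hnP
      exact le_antisymm hΩle (not_lt.mp (fun hlt => hnP (hPpos hlt)))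
    · intro h0 hP
      exact absurd (hPneg hP) (by rw [h0]; exact lt_irrefl 0)
  constructor
  · exact ⟨hPneg, hPpos⟩
  · constructor
    · intro hnP
      exact ht0 (le_antisymm hΩle (not_lt.mp (fun hlt => hnP (hPpos hlt))))
    · intro ht hP
      exact absurd (hPneg hP) (by rw [h0t ht]; exact lt_irrefl 0)
end

section
/- In the setting of the search-direction subproblem, if Ω(x) < 0 then t(x) ≠ 0 and t(x) is a descent direction for H at x, i.e., ⟨∇h_{ij}(x), t(x)⟩ < 0 for all j ∈ {1,...,m} and all active indices i ∈ I_j(x). -/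
theorem Omega_neg_gives_descent_direction {n m p : ℕ}
    (h : Fin (m + 1) → Fin (p + 1) → EuclideanSpace ℝ (Fin n) → ℝ)
    (hdiff : ∀ j i, ContDiff ℝ 1 (h j i))
    (H : Fin (m + 1) → EuclideanSpace ℝ (Fin n) → ℝ)
    (hH : ∀ j y, H j y = Finset.univ.sup' Finset.univ_nonempty (fun i => h j i y))
    (D : Set (EuclideanSpace ℝ (Fin n)))
    (hDclosed : IsClosed D) (hDconv : Convex ℝ D)
    (β : ℝ) (hβ : 0 < β)
    (Θ : EuclideanSpace ℝ (Fin n) → EuclideanSpace ℝ (Fin n) → ℝ)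
    (hΘ : ∀ x t, Θ x t = Finset.univ.sup' Finset.univ_nonempty
      (fun ji : Fin (m + 1) × Fin (p + 1) =>
        h ji.1 ji.2 x + (inner ℝ (gradient (h ji.1 ji.2) x) t : ℝ) - H ji.1 x))
    (x : EuclideanSpace ℝ (Fin n)) (hx : x ∈ D)
    (t : EuclideanSpace ℝ (Fin n)) (htmem : x + t ∈ D)
    (hmin : ∀ s : EuclideanSpace ℝ (Fin n), x + s ∈ D →
      β * Θ x t + (1 / 2) * ‖t‖ ^ 2 ≤ β * Θ x s + (1 / 2) * ‖s‖ ^ 2)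
    (hΩneg : β * Θ x t + (1 / 2) * ‖t‖ ^ 2 < 0) :
    t ≠ 0 ∧ ∀ j i, h j i x = H j x →
      (inner ℝ (gradient (h j i) x) t : ℝ) < 0 := by
  have hΘneg : Θ x t < 0 := by
    nlinarith [sq_nonneg ‖t‖]
  have hterm : ∀ j i, h j i x + (inner ℝ (gradient (h j i) x) t : ℝ) - H j x ≤ Θ x t := by
    intro j i
    rw [hΘ]
    exact Finset.le_sup' (f := fun ji : Fin (m + 1) × Fin (p + 1) =>
      h ji.1 ji.2 x + (inner ℝ (gradient (h ji.1 ji.2) x) t : ℝ) - H ji.1 x)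
      (Finset.mem_univ (j, i))
  have hdesc : ∀ j i, h j i x = H j x → (inner ℝ (gradient (h j i) x) t : ℝ) < 0 := by
    intro j i hact
    have := hterm j i
    rw [hact] at this
    linarith
  refine ⟨?_, hdesc⟩
  intro ht0
  obtain ⟨i, _, hi⟩ := Finset.exists_mem_eq_sup' (Finset.univ_nonempty)
    (fun i => h (0 : Fin (m + 1)) i x)
  have hact : h 0 i x = H 0 x := by rw [hH]; exact hi.symm
  have := hdesc 0 i hact
  rw [ht0, inner_zero_right] at this
  exact lt_irrefl _ this
end

section
/- Let (y^k) be a sequence in ℝ^n that is quasi-Fejér convergent to a nonempty set Y ⊆ ℝ^n, i.e., for every y ∈ Y there exist nonnegative reals (γ_k) with ∑_{k=0}^∞ γ_k < ∞ such that ‖y^{k+1} − y‖² ≤ ‖y^k − y‖² + γ_k for all k. Then (y^k) is bounded, and if some cluster point y* of (y^k) belongs to Y, then y^k → y*. -/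
open Filter

theorem quasiFejer_bounded_and_convergent {n : ℕ}
    (y : ℕ → EuclideanSpace ℝ (Fin n))
    (Y : Set (EuclideanSpace ℝ (Fin n))) (hY : Y.Nonempty)
    (hqf : ∀ z ∈ Y, ∃ γ : ℕ → ℝ, (∀ k, 0 ≤ γ k) ∧ Summable γ ∧
      ∀ k, ‖y (k + 1) - z‖ ^ 2 ≤ ‖y k - z‖ ^ 2 + γ k) :
    Bornology.IsBounded (Set.range y) ∧
    ∀ z ∈ Y, MapClusterPt z atTop y → Tendsto y atTop (nhds z) := by
  -- general bound: for any z ∈ Y, ‖y k - z‖^2 ≤ ‖y 0 - z‖^2 + ∑' γ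
  have bound : ∀ z ∈ Y, ∀ γ : ℕ → ℝ, (∀ k, 0 ≤ γ k) → Summable γ →
      (∀ k, ‖y (k + 1) - z‖ ^ 2 ≤ ‖y k - z‖ ^ 2 + γ k) →
      ∀ k, ‖y k - z‖ ^ 2 ≤ ‖y 0 - z‖ ^ 2 + ∑ i ∈ Finset.range k, γ i := by
    intro z _ γ hγ0 hγs hle k
    induction k with
    | zero => simp
    | succ k ih =>
      have := hle k
      rw [Finset.sum_range_succ]
      linarith
  constructor
  · obtain ⟨z, hz⟩ := hY
    obtain ⟨γ, hγ0, hγs, hle⟩ := hqf z hz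
    rw [isBounded_iff_forall_norm_le]
    refine ⟨Real.sqrt (‖y 0 - z‖ ^ 2 + ∑' i, γ i) + ‖z‖, ?_⟩
    rintro _ ⟨k, rfl⟩
    have h1 : ‖y k - z‖ ^ 2 ≤ ‖y 0 - z‖ ^ 2 + ∑' i, γ i := by
      have := bound z hz γ hγ0 hγs hle k
      have h2 : ∑ i ∈ Finset.range k, γ i ≤ ∑' i, γ i :=
        Summable.sum_le_tsum _ (fun i _ => hγ0 i) hγs
      linarith
    have h3 : ‖y k - z‖ ≤ Real.sqrt (‖y 0 - z‖ ^ 2 + ∑' i, γ i) :=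
      (Real.le_sqrt (norm_nonneg _) (add_nonneg (by positivity) (tsum_nonneg hγ0))).2 h1
    calc ‖y k‖ = ‖(y k - z) + z‖ := by rw [sub_add_cancel]
      _ ≤ ‖y k - z‖ + ‖z‖ := norm_add_le _ _
      _ ≤ _ := by linarith
  · intro z hz hcl
    obtain ⟨γ, hγ0, hγs, hle⟩ := hqf z hz
    set a : ℕ → ℝ := fun k => ‖y k - z‖ ^ 2 with ha
    set S : ℕ → ℝ := fun k => ∑ i ∈ Finset.range k, γ i with hS
    have hSt : Tendsto S atTop (nhds (∑' i, γ i)) := hγs.hasSum.tendsto_sum_nat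
    -- b = a - S is antitone and bounded below
    have hanti : Antitone (fun k => a k - S k) := by
      apply antitone_nat_of_succ_le
      intro k
      have := hle k
      simp only [hS, Finset.sum_range_succ]
      simp only [ha]
      linarith
    have hbdd : BddBelow (Set.range fun k => a k - S k) := by
      refine ⟨-(∑' i, γ i), ?_⟩
      rintro _ ⟨k, rfl⟩
      have h1 : 0 ≤ a k := by positivity
      have h2 : S k ≤ ∑' i, γ i := Summable.sum_le_tsum _ (fun i _ => hγ0 i) hγs
      simp only
      linarith
    obtain ⟨L, hL⟩ : ∃ L, Tendsto (fun k => a k - S k) atTop (nhds L) :=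
      ⟨_, tendsto_atTop_ciInf hanti hbdd⟩
    -- a tends to L + ∑' γ
    have hat : Tendsto a atTop (nhds (L + ∑' i, γ i)) := by
      have := hL.add hSt
      simpa using this
    -- 0 is a cluster point of a
    have hcl0 : MapClusterPt (0 : ℝ) atTop a := by
      have hcont : ContinuousAt (fun x : EuclideanSpace ℝ (Fin n) => ‖x - z‖ ^ 2) z :=
        (Continuous.norm (continuous_id.sub continuous_const)).pow 2 |>.continuousAt
      have := hcl.continuousAt_comp hcont
      simpa [Function.comp_def, ha] using this
    -- so L + ∑' γ = 0
    have heq : (0 : ℝ) = L + ∑' i, γ i := by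
      have hne : (nhds (0 : ℝ) ⊓ map a atTop).NeBot := hcl0
      have hle' : map a atTop ≤ nhds (L + ∑' i, γ i) := hat
      have : (nhds (0 : ℝ) ⊓ nhds (L + ∑' i, γ i)).NeBot :=
        hne.mono (inf_le_inf_left _ hle')
      exact eq_of_nhds_neBot this
    have ha0 : Tendsto a atTop (nhds 0) := heq ▸ hat
    -- conclude convergence
    rw [tendsto_iff_norm_sub_tendsto_zero]
    have hsqrt : Tendsto (fun k => Real.sqrt (a k)) atTop (nhds (Real.sqrt 0)) :=
      (Real.continuous_sqrt.tendsto 0).comp ha0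
    simp only [Real.sqrt_zero] at hsqrt
    convert hsqrt using 2 with k
    rw [ha]
    rw [Real.sqrt_sq (norm_nonneg _)]
end
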